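/- arXiv:2307.00604 — 7 statements merged into one kernel-verified Lean document; each statement's English description precedes it below -/
import Mathlib

section
/- Let G be a finite simple undirected graph, s and t distinct non-adjacent vertices of G, and S, T minimal s,t-separators of G. Then C_s(G−S) ⊆ C_s(G−T) if and only if T ⊆ S ∪ C_t(G−S). -/
variable {V : Type*}

/-- The graph obtained from `G` by deleting the vertices in `S` (deleted vertices
become isolated; components of vertices outside `S` are the components of `G − S`). -/
def gdel (G : SimpleGraph V) (S : Set V) : SimpleGraph V where
  Adj a b := G.Adj a b ∧ a ∉ S ∧ b ∉ S
  symm := by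
    constructor
    intro a b h
    exact ⟨h.1.symm, h.2.2, h.2.1⟩
  loopless := by
    constructor
    intro a h
    exact G.irrefl h.1

/-- `compS G S v` is the vertex set of the connected component of `v` in `G − S`. -/
def compS (G : SimpleGraph V) (S : Set V) (v : V) : Set V :=
  {w | (gdel G S).Reachable v w}

/-- `S` is an `s,t`-separator of `G`: `S ⊆ V(G) \ {s,t}` and `s` and `t` lie in
different connected components of `G − S`. -/
def IsSep (G : SimpleGraph V) (s t : V) (S : Set V) : Prop :=
  s ∉ S ∧ t ∉ S ∧ ¬ (gdel G S).Reachable s t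

/-- A minimal `s,t`-separator: no proper subset is an `s,t`-separator. -/
def IsMinSep (G : SimpleGraph V) (s t : V) (S : Set V) : Prop :=
  IsSep G s t S ∧ ∀ S' : Set V, S' ⊂ S → ¬ IsSep G s t S'

/-- The (open) neighborhood of a vertex set `C` in `G`. -/
def nbdSet (G : SimpleGraph V) (C : Set V) : Set V :=
  {v | v ∉ C ∧ ∃ w ∈ C, G.Adj v w}

open SimpleGraph

lemma support_not_mem (G : SimpleGraph V) (S : Set V) {a b : V} (p : (gdel G S).Walk a b)
    (ha : a ∉ S) : ∀ v ∈ p.support, v ∉ S := by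
  induction p with
  | nil => intro v hv; simp only [Walk.support_nil, List.mem_singleton] at hv; subst hv; exact ha
  | cons h q ih =>
      intro v hv
      rw [Walk.support_cons] at hv
      rcases List.mem_cons.mp hv with rfl | hv
      · exact ha
      · exact ih h.2.2 v hv

lemma transfer (G : SimpleGraph V) (S T : Set V) {a b : V} (p : (gdel G S).Walk a b)
    (h : ∀ v ∈ p.support, v ∉ T) : (gdel G T).Reachable a b := by
  induction p with
  | nil => exact Reachable.refl _
  | cons hadj q ih =>
      refine (SimpleGraph.Adj.reachable ?_).trans (ih fun v hv => h v (by simp [hv]))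
      exact ⟨hadj.1, h _ (by simp), h _ (by simp)⟩

lemma reachable_of_mem_support {G : SimpleGraph V} {a b v : V}
    (p : G.Walk a b) (hv : v ∈ p.support) : G.Reachable a v := by
  classical
  exact (p.takeUntil v hv).reachable

lemma mem_compS_not_mem {G : SimpleGraph V} {S : Set V} {s v : V} (hs : s ∉ S)
    (hv : v ∈ compS G S s) : v ∉ S := by
  obtain ⟨p⟩ := hv
  exact support_not_mem G S p hs v p.end_mem_support

lemma minsep_neighbor {G : SimpleGraph V} {s t : V} {S : Set V}
    (hS : IsMinSep G s t S) {v : V} (hv : v ∈ S) :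
    ∃ u, u ∈ compS G S s ∧ G.Adj u v := by
  classical
  have hs : s ∉ S := hS.1.1
  have ht : t ∉ S := hS.1.2.1
  have hs' : s ∉ S \ {v} := fun h => hs h.1
  have ht' : t ∉ S \ {v} := fun h => ht h.1
  have hss : S \ {v} ⊂ S := Set.sdiff_singleton_ssubset.mpr hv
  have hreach : (gdel G (S \ {v})).Reachable s t := by
    by_contra h
    exact hS.2 _ hss ⟨hs', ht', h⟩
  obtain ⟨p0⟩ := hreach
  set p := p0.bypass with hpdef
  have hp : p.IsPath := p0.bypass_isPath
  have hvp : v ∈ p.support := by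
    by_contra hvp
    refine hS.1.2.2 (transfer G _ S p fun w hw hwS => ?_)
    have h1 := support_not_mem G (S \ {v}) p hs' w hw
    exact h1 ⟨hwS, fun he => hvp (by simpa using he ▸ hw)⟩
  set q := p.takeUntil v hvp with hqdef
  have hq : q.IsPath := hp.takeUntil hvp
  have hqr : q.reverse.IsPath := hq.reverse
  have hsv : v ≠ s := fun h => hs (h ▸ hv)
  have hnn : ¬ q.reverse.Nil := Walk.not_nil_of_ne hsv
  obtain ⟨u, hadj, r, hre⟩ := Walk.not_nil_iff.mp hnn
  have huS : u ∉ S := by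
    intro huS
    exact hadj.2.2 ⟨huS, by simpa using hadj.1.ne'⟩
  have hvr : v ∉ r.support := by
    have := hqr.support_nodup
    rw [hre, Walk.support_cons] at this
    exact (List.nodup_cons.mp this).1
  have hrS : ∀ w ∈ r.support, w ∉ S := by
    intro w hw hwS
    have h1 := support_not_mem G (S \ {v}) r (fun h => huS h.1) w hw
    exact h1 ⟨hwS, fun he => hvr (by simpa using he ▸ hw)⟩
  refine ⟨u, ?_, hadj.1.symm⟩
  exact (transfer G _ S r hrS).symm

/-- For minimal `s,t`-separators `S, T`:
`C_s(G−S) ⊆ C_s(G−T)` iff `T ⊆ S ∪ C_t(G−S)`. -/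
theorem stmt_2 [Fintype V] (G : SimpleGraph V) (s t : V) (hst : s ≠ t)
    (hadj : ¬ G.Adj s t) (S T : Set V)
    (hS : IsMinSep G s t S) (hT : IsMinSep G s t T) :
    compS G S s ⊆ compS G T s ↔ T ⊆ S ∪ compS G S t := by
  classical
  constructor
  · -- ⇒
    intro hsub x hxT
    by_cases hxS : x ∈ S
    · exact Or.inl hxS
    refine Or.inr ?_
    have hs' : s ∉ T \ {x} := fun h => hT.1.1 h.1
    have ht' : t ∉ T \ {x} := fun h => hT.1.2.1 h.1
    have hss : T \ {x} ⊂ T := Set.sdiff_singleton_ssubset.mpr hxT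
    have hreach : (gdel G (T \ {x})).Reachable s t := by
      by_contra h
      exact hT.2 _ hss ⟨hs', ht', h⟩
    obtain ⟨p0⟩ := hreach
    set p := p0.bypass with hpdef
    have hp : p.IsPath := p0.bypass_isPath
    have hxp : x ∈ p.support := by
      by_contra hxp
      refine hT.1.2.2 (transfer G _ T p fun w hw hwT => ?_)
      have h1 := support_not_mem G (T \ {x}) p hs' w hw
      exact h1 ⟨hwT, fun he => hxp (by simpa using he ▸ hw)⟩
    have hxp' : x ∈ p.reverse.support := by
      rw [Walk.support_reverse]; exact List.mem_reverse.mpr hxp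
    set r := p.reverse.takeUntil x hxp' with hrdef
    have hr : r.IsPath := hp.reverse.takeUntil hxp'
    -- r : Walk t x in gdel G (T \ {x})
    have hrT : ∀ v ∈ r.support, v ≠ x → v ∉ T := by
      intro v hv hne hvT
      exact support_not_mem G (T \ {x}) r ht' v hv ⟨hvT, by simpa using hne⟩
    have hrS : ∀ v ∈ r.support, v ∉ S := by
      intro v hv hvS
      have hvx : v ≠ x := fun h => hxS (h ▸ hvS)
      obtain ⟨u, huC, huadj⟩ := minsep_neighbor hS hvS
      have huT : u ∈ compS G T s := hsub huC
      have huT' : u ∉ T := mem_compS_not_mem hT.1.1 huT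
      have hvT' : v ∉ T := hrT v hv hvx
      -- x is not on the initial segment of r up to v
      have hxnot : x ∉ (r.takeUntil v hv).support := by
        have hsupp := Walk.support_append (r.takeUntil v hv) (r.dropUntil v hv)
        rw [Walk.take_spec r hv] at hsupp
        have hnd := hr.support_nodup
        rw [hsupp] at hnd
        have hxdrop : x ∈ (r.dropUntil v hv).support.tail := by
          have hxd : x ∈ (r.dropUntil v hv).support := Walk.end_mem_support _
          rw [Walk.support_eq_cons (r.dropUntil v hv)] at hxd
          rcases List.mem_cons.mp hxd with h | h
          · exact absurd h.symm hvx
          · exact h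
        intro hxtake
        exact List.disjoint_of_nodup_append hnd hxtake hxdrop
      have htv : (gdel G T).Reachable t v := by
        refine transfer G _ T (r.takeUntil v hv) fun w hw => ?_
        refine hrT w (Walk.support_takeUntil_subset r hv hw) fun he => hxnot (he ▸ hw)
      exact hT.1.2.2 ((huT.trans (SimpleGraph.Adj.reachable ⟨huadj, huT', hvT'⟩)).trans htv.symm)
    exact transfer G _ S r hrS
  · -- ⇐
    intro hTsub u hu
    obtain ⟨p⟩ := hu
    refine transfer G S T p fun v hv hvT => ?_
    rcases hTsub hvT with hvS | hvC
    · exact support_not_mem G S p hS.1.1 v hv hvS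
    · exact hS.1.2.2 ((reachable_of_mem_support p hv).trans hvC.symm)
end

section
/- Let G be a finite simple undirected graph, s and t distinct non-adjacent vertices of G, and S a minimal s,t-separator of G. Let H_S be the graph with V(H_S) = V(G) and E(H_S) = E(G) ∪ {(s,v) : v ∈ S}. Then the set of minimal s,t-separators of H_S equals the set of minimal s,t-separators Q of G such that Q ⊆ S ∪ C_t(G−S). -/
variable {V : Type*}

lemma gdel_walk_not_mem (G' : SimpleGraph V) (T : Set V) :
    ∀ {a b : V}, (gdel G' T).Walk a b → a ∉ T → b ∉ T := by
  intro a b W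
  induction W with
  | nil => exact id
  | cons h p ih => intro _; exact ih h.2.2

lemma gdel_reach_not_mem (G' : SimpleGraph V) (T : Set V) {a b : V}
    (h : (gdel G' T).Reachable a b) (ha : a ∉ T) : b ∉ T := by
  obtain ⟨W⟩ := h
  exact gdel_walk_not_mem G' T W ha

lemma gen_min (G' : SimpleGraph V) (T : Set V) (v₀ r : V) (hr : r ∉ T) :
    ∀ {a b : V}, (gdel G' (T \ {v₀})).Walk a b → (gdel G' T).Reachable r a →
      ¬ (gdel G' T).Reachable r b →
      ∃ u, (gdel G' T).Reachable r u ∧ G'.Adj u v₀ := by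
  intro a b W
  induction W with
  | nil => intro ha hb; exact absurd ha hb
  | @cons a c b h p ih =>
    intro ha hb
    by_cases hc : c ∈ T
    · have hcv : c = v₀ := by
        have := h.2.2
        simp [Set.mem_diff] at this
        exact this hc
      exact ⟨a, ha, hcv ▸ h.1⟩
    · have haT : a ∉ T := gdel_reach_not_mem G' T ha hr
      exact ih (ha.trans (SimpleGraph.Adj.reachable ⟨h.1, haT, hc⟩)) hb

lemma reach_transfer (G' : SimpleGraph V) (T Q' : Set V) (r : V)
    (hQ : ∀ x, (gdel G' T).Reachable r x → x ∉ Q') :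
    ∀ {a b : V}, (gdel G' T).Walk a b → (gdel G' T).Reachable r a →
      (gdel G' Q').Reachable r a → (gdel G' Q').Reachable r b := by
  intro a b W
  induction W with
  | nil => intro _ h; exact h
  | @cons a c b h p ih =>
    intro hTa hQa
    have hTc : (gdel G' T).Reachable r c := hTa.trans (SimpleGraph.Adj.reachable h)
    exact ih hTc (hQa.trans (SimpleGraph.Adj.reachable ⟨h.1, hQ a hTa, hQ c hTc⟩))

lemma not_sep_reach {G : SimpleGraph V} {s t : V} {S' : Set V}
    (h : ¬ IsSep G s t S') (hs : s ∉ S') (ht : t ∉ S') :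
    (gdel G S').Reachable s t := by
  by_contra hR
  exact h ⟨hs, ht, hR⟩

-- every vertex of S has a neighbor in the s-component of G - S

lemma nbr_in_scomp {G : SimpleGraph V} {s t : V} {S : Set V}
    (hS : IsMinSep G s t S) {v : V} (hv : v ∈ S) :
    ∃ u, (gdel G S).Reachable s u ∧ G.Adj u v := by
  have hns : s ∉ S := hS.1.1
  have hnt : t ∉ S := hS.1.2.1
  have hsub : S \ {v} ⊂ S := by
    constructor
    · exact Set.diff_subset
    · intro hle
      exact (hle hv).2 rfl
  have hR : (gdel G (S \ {v})).Reachable s t :=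
    not_sep_reach (hS.2 _ hsub) (fun h => hns h.1) (fun h => hnt h.1)
  obtain ⟨W⟩ := hR
  exact gen_min G S v s hns W (SimpleGraph.Reachable.refl s) hS.1.2.2

-- the s-component of G-S avoids any Q' ⊆ S ∪ C_t

lemma scomp_avoids {G : SimpleGraph V} {s t : V} {S Q' : Set V}
    (hS : IsMinSep G s t S) (hQ' : Q' ⊆ S ∪ compS G S t) :
    ∀ x, (gdel G S).Reachable s x → x ∉ Q' := by
  intro x hx hxQ
  rcases hQ' hxQ with h | h
  · exact gdel_reach_not_mem G S hx hS.1.1 h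
  · exact hS.1.2.2 (hx.trans h.symm)

-- each v ∈ S \ Q' is reachable from s in G - Q'

lemma s_reaches_S {G : SimpleGraph V} {s t : V} {S Q' : Set V}
    (hS : IsMinSep G s t S) (hQ' : Q' ⊆ S ∪ compS G S t)
    {c : V} (hc : c ∈ S) (hcQ : c ∉ Q') : (gdel G Q').Reachable s c := by
  obtain ⟨u, hu, hadj⟩ := nbr_in_scomp hS hc
  have havoid := scomp_avoids hS hQ'
  have hu' := hu
  obtain ⟨W⟩ := hu'
  have hsu : (gdel G Q').Reachable s u :=
    reach_transfer G S Q' s havoid W (SimpleGraph.Reachable.refl s)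
      (SimpleGraph.Reachable.refl s)
  exact hsu.trans (SimpleGraph.Adj.reachable ⟨hadj, havoid u hu, hcQ⟩)

-- transfer lemma: walks in H - Q' stay reachable from s in G - Q'

lemma walk_H_to_G {G H' : SimpleGraph V} {s t : V} {S Q' : Set V}
    (hS : IsMinSep G s t S)
    (hH : ∀ a b, H'.Adj a b → G.Adj a b ∨ (a = s ∧ b ∈ S) ∨ (b = s ∧ a ∈ S))
    (hQ' : Q' ⊆ S ∪ compS G S t) :
    ∀ {a b : V}, (gdel H' Q').Walk a b → (gdel G Q').Reachable s a →
      (gdel G Q').Reachable s b := by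
  intro a b W
  induction W with
  | nil => exact id
  | @cons a c b h p ih =>
    intro ha
    rcases hH a c h.1 with hG | ⟨has, hcS⟩ | ⟨hcs, haS⟩
    · exact ih (ha.trans (SimpleGraph.Adj.reachable ⟨hG, h.2.1, h.2.2⟩))
    · exact ih (s_reaches_S hS hQ' hcS h.2.2)
    · exact ih (by rw [hcs])

-- separation transfers from G to H for Q' ⊆ S ∪ C_t

lemma sep_G_to_H {G H' : SimpleGraph V} {s t : V} {S Q' : Set V}
    (hS : IsMinSep G s t S)
    (hH : ∀ a b, H'.Adj a b → G.Adj a b ∨ (a = s ∧ b ∈ S) ∨ (b = s ∧ a ∈ S))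
    (hQ' : Q' ⊆ S ∪ compS G S t)
    (hsep : ¬ (gdel G Q').Reachable s t) : ¬ (gdel H' Q').Reachable s t := by
  intro ⟨W⟩
  exact hsep (walk_H_to_G hS hH hQ' W (SimpleGraph.Reachable.refl s))

-- the t-component of H - Q is contained in C_t(G - S)

lemma tcomp_sub {G H' : SimpleGraph V} {s t : V} {S Q : Set V}
    (hH : ∀ a b, H'.Adj a b → G.Adj a b ∨ (a = s ∧ b ∈ S) ∨ (b = s ∧ a ∈ S))
    (hH2 : ∀ v ∈ S, v ≠ s → H'.Adj s v)
    (hsQ : s ∉ Q) (htS : t ∉ S)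
    (hsep : ¬ (gdel H' Q).Reachable s t) :
    ∀ {a b : V}, (gdel H' Q).Walk a b → (gdel H' Q).Reachable t a →
      (gdel G S).Reachable t a → (gdel G S).Reachable t b := by
  intro a b W
  induction W with
  | nil => intro _ h; exact h
  | @cons a c b h p ih =>
    intro hHa hGa
    have hHc : (gdel H' Q).Reachable t c := hHa.trans (SimpleGraph.Adj.reachable h)
    rcases hH a c h.1 with hG | ⟨has, _⟩ | ⟨hcs, _⟩
    · -- G-edge; show c ∉ S
      have haS : a ∉ S := gdel_reach_not_mem G S hGa htS
      have hcS : c ∉ S := by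
        intro hcS
        have hcs : c ≠ s := by
          intro hcs
          exact hsep ((hcs ▸ hHc).symm)
        have : (gdel H' Q).Reachable t s :=
          hHc.trans (SimpleGraph.Adj.reachable ⟨(hH2 c hcS hcs).symm, h.2.2, hsQ⟩)
        exact hsep this.symm
      exact ih hHc (hGa.trans (SimpleGraph.Adj.reachable ⟨hG, haS, hcS⟩))
    · exact absurd (has ▸ hHa).symm hsep
    · exact absurd (hcs ▸ hHc).symm hsep

lemma gdel_mono {G H' : SimpleGraph V} (h : G ≤ H') (Q : Set V) :
    gdel G Q ≤ gdel H' Q := fun _ _ hab => ⟨h hab.1, hab.2.1, hab.2.2⟩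

/-- For a minimal `s,t`-separator `S`, the minimal `s,t`-separators of
the graph `H_S` obtained by adding all edges from `s` to `S` are exactly the minimal
`s,t`-separators `Q` of `G` with `Q ⊆ S ∪ C_t(G−S)`. -/
theorem stmt_4 [Fintype V] (G : SimpleGraph V) (s t : V) (hst : s ≠ t)
    (hadj : ¬ G.Adj s t) (S : Set V) (hS : IsMinSep G s t S) :
    {Q : Set V |
        IsMinSep (G ⊔ SimpleGraph.fromRel (fun a b => a = s ∧ b ∈ S)) s t Q}
      = {Q : Set V | IsMinSep G s t Q ∧ Q ⊆ S ∪ compS G S t} := by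
  set H : SimpleGraph V := G ⊔ SimpleGraph.fromRel (fun a b => a = s ∧ b ∈ S) with hHdef
  have hH : ∀ a b, H.Adj a b → G.Adj a b ∨ (a = s ∧ b ∈ S) ∨ (b = s ∧ a ∈ S) := by
    intro a b hab
    rw [hHdef, SimpleGraph.sup_adj, SimpleGraph.fromRel_adj] at hab
    tauto
  have hH2 : ∀ v ∈ S, v ≠ s → H.Adj s v := by
    intro v hv hvs
    rw [hHdef, SimpleGraph.sup_adj, SimpleGraph.fromRel_adj]
    exact Or.inr ⟨hvs.symm, Or.inl ⟨rfl, hv⟩⟩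
  have hGH : G ≤ H := le_sup_left
  ext Q
  simp only [Set.mem_setOf_eq]
  constructor
  · intro hQ
    have hsQ : s ∉ Q := hQ.1.1
    have htQ : t ∉ Q := hQ.1.2.1
    have hsepH : ¬ (gdel H Q).Reachable s t := hQ.1.2.2
    have hsepG : ¬ (gdel G Q).Reachable s t :=
      fun h => hsepH (h.mono (gdel_mono hGH Q))
    have hQsub : Q ⊆ S ∪ compS G S t := by
      intro v hv
      have hssub : Q \ {v} ⊂ Q := by
        constructor
        · exact Set.diff_subset
        · intro hle
          exact (hle hv).2 rfl
      have hR : (gdel H (Q \ {v})).Reachable s t :=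
        not_sep_reach (hQ.2 _ hssub) (fun h => hsQ h.1) (fun h => htQ h.1)
      obtain ⟨W⟩ := hR.symm
      have hb : ¬ (gdel H Q).Reachable t s := fun h => hsepH h.symm
      obtain ⟨w, hwreach, hwadj⟩ :=
        gen_min H Q v t htQ W (SimpleGraph.Reachable.refl t) hb
      have hwreach' := hwreach
      obtain ⟨W'⟩ := hwreach'
      have hwct : (gdel G S).Reachable t w :=
        tcomp_sub hH hH2 hsQ hS.1.2.1 hsepH W' (SimpleGraph.Reachable.refl t)
          (SimpleGraph.Reachable.refl t)
      by_cases hvS : v ∈ S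
      · exact Or.inl hvS
      · refine Or.inr ?_
        have hwS : w ∉ S := gdel_reach_not_mem G S hwct hS.1.2.1
        have hws : w ≠ s := fun h => hsepH ((h ▸ hwreach).symm)
        have hvs : v ≠ s := fun h => hsQ (h ▸ hv)
        have hGwv : G.Adj w v := by
          rcases hH w v hwadj with h | ⟨h, _⟩ | ⟨h, _⟩
          · exact h
          · exact absurd h hws
          · exact absurd h hvs
        exact hwct.trans (SimpleGraph.Adj.reachable ⟨hGwv, hwS, hvS⟩)
    refine ⟨⟨⟨hsQ, htQ, hsepG⟩, ?_⟩, hQsub⟩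
    intro S' hsub hSep'
    exact hQ.2 S' hsub
      ⟨hSep'.1, hSep'.2.1,
        sep_G_to_H hS hH (hsub.subset.trans hQsub) hSep'.2.2⟩
  · rintro ⟨hQmin, hQsub⟩
    refine ⟨⟨hQmin.1.1, hQmin.1.2.1, sep_G_to_H hS hH hQsub hQmin.1.2.2⟩, ?_⟩
    intro S' hsub hSepH
    exact hQmin.2 S' hsub
      ⟨hSepH.1, hSepH.2.1, fun h => hSepH.2.2 (h.mono (gdel_mono hGH S'))⟩
end

section
/- Let G be a finite simple undirected graph, s and t distinct non-adjacent vertices of G, and k a positive integer. For every minimal s,t-separator T of G with |T| ≤ k, there exists a k-important s,t-separator S of G such that C_s(G−S) ⊆ C_s(G−T). -/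
variable {V : Type*}

/-- A `k`-important `s,t`-separator: a minimal `s,t`-separator `S` with `|S| ≤ k`
such that no minimal `s,t`-separator `S'` satisfies `|S'| ≤ |S|` and
`C_s(G−S') ⊊ C_s(G−S)`. -/
def KImportant (G : SimpleGraph V) (s t : V) (k : ℕ) (S : Set V) : Prop :=
  IsMinSep G s t S ∧ S.ncard ≤ k ∧
    ¬ ∃ S' : Set V, IsMinSep G s t S' ∧ S'.ncard ≤ S.ncard ∧
      compS G S' s ⊂ compS G S s

theorem stmt_5_aux [Fintype V] (G : SimpleGraph V) (s t : V) (k : ℕ) :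
    ∀ n : ℕ, ∀ T : Set V, IsMinSep G s t T → T.ncard ≤ k →
      (compS G T s).ncard ≤ n →
      ∃ S : Set V, KImportant G s t k S ∧ compS G S s ⊆ compS G T s := by
  intro n
  induction n with
  | zero =>
    intro T hT hTk hn
    exfalso
    have hs : s ∈ compS G T s := SimpleGraph.Reachable.refl s
    have hne : (compS G T s).Nonempty := ⟨s, hs⟩
    have := (Set.ncard_pos (Set.toFinite _)).mpr hne
    omega
  | succ n ih =>
    intro T hT hTk hn
    by_cases h : KImportant G s t k T
    · exact ⟨T, h, subset_rfl⟩
    · unfold KImportant at h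
      push_neg at h
      obtain ⟨S', hS', hle, hsub⟩ := h hT hTk
      have hlt : (compS G S' s).ncard < (compS G T s).ncard :=
        Set.ncard_lt_ncard hsub (Set.toFinite _)
      obtain ⟨S, hS, hsub2⟩ := ih S' hS' (le_trans hle hTk) (by omega)
      exact ⟨S, hS, hsub2.trans hsub.subset⟩

/-- Every minimal `s,t`-separator `T` with `|T| ≤ k` is dominated by a
`k`-important `s,t`-separator `S` with `C_s(G−S) ⊆ C_s(G−T)`. -/
theorem stmt_5 [Fintype V] (G : SimpleGraph V) (s t : V) (hst : s ≠ t)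
    (hadj : ¬ G.Adj s t) (k : ℕ) (hk : 0 < k)
    (T : Set V) (hT : IsMinSep G s t T) (hTk : T.ncard ≤ k) :
    ∃ S : Set V, KImportant G s t k S ∧ compS G S s ⊆ compS G T s := by
  exact stmt_5_aux G s t k (compS G T s).ncard T hT hTk le_rfl
end

section
/- Let G be a finite simple undirected graph, s and t distinct non-adjacent vertices of G, and k a positive integer. For every minimal s,t-separator T of G with |T| ≤ k, there exists a k-important s,t-separator S of G such that T ⊆ S ∪ C_t(G−S). -/
variable {V : Type*}

/-- A vertex reachable from `s ∉ S` in `G − S` is itself not in `S`. -/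
lemma notin_of_reachable {G : SimpleGraph V} {S : Set V} {s v : V}
    (hs : s ∉ S) (h : (gdel G S).Reachable s v) : v ∉ S := by
  rcases h.symm with ⟨p⟩
  cases p with
  | nil => exact hs
  | cons h q => exact h.2.1

lemma walk_hits_nbr {G : SimpleGraph V} {s u : V} {T : Set V}
    (hs : s ∉ T) :
    ∀ {x y : V}, (gdel G (T \ {u})).Walk x y → x ∈ compS G T s →
      y ∈ compS G T s ∨ ∃ w ∈ compS G T s, G.Adj u w := by
  intro x y p
  induction p with
  | nil => intro hx; exact Or.inl hx
  | @cons a b c h q ih =>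
    intro hx
    by_cases hb : b = u
    · subst hb; exact Or.inr ⟨a, hx, h.1.symm⟩
    · have hbT : b ∉ T := fun hbT => h.2.2 (Set.mem_diff_singleton.mpr ⟨hbT, hb⟩)
      have haT : a ∉ T := notin_of_reachable hs hx
      have hb' : b ∈ compS G T s :=
        (show (gdel G T).Reachable s a from hx).trans
          (SimpleGraph.Adj.reachable ⟨h.1, haT, hbT⟩)
      exact ih hb'

lemma exists_nbr_compS {G : SimpleGraph V} {s t : V} {T : Set V}
    (hT : IsMinSep G s t T) {u : V} (hu : u ∈ T) :
    ∃ w ∈ compS G T s, G.Adj u w := by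
  have hs : s ∉ T := hT.1.1
  have ht : t ∉ T := hT.1.2.1
  have hsub : T \ {u} ⊂ T := Set.sdiff_singleton_ssubset.mpr hu
  have hnsep := hT.2 _ hsub
  have hreach : (gdel G (T \ {u})).Reachable s t := by
    by_contra hr
    exact hnsep ⟨fun h => hs h.1, fun h => ht h.1, hr⟩
  obtain ⟨p⟩ := hreach
  rcases walk_hits_nbr hs p (SimpleGraph.Reachable.refl s) with h | h
  · exact absurd (show (gdel G T).Reachable s t from h) hT.1.2.2
  · exact h

/-- If `C_s(G−S) ⊆ C_s(G−T)` then `S ⊆ C_s(G−T) ∪ T`. -/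
lemma sep_subset {G : SimpleGraph V} {s t : V} {S T : Set V}
    (hS : IsMinSep G s t S) (hs : s ∉ T)
    (hcs : compS G S s ⊆ compS G T s) : S ⊆ compS G T s ∪ T := by
  intro u hu
  by_cases huT : u ∈ T
  · exact Or.inr huT
  · obtain ⟨w, hw, hadj⟩ := exists_nbr_compS hS hu
    have hw' : w ∈ compS G T s := hcs hw
    have hwT : w ∉ T := notin_of_reachable hs hw'
    exact Or.inl ((show (gdel G T).Reachable s w from hw').trans
      (SimpleGraph.Adj.reachable ⟨hadj.symm, hwT, huT⟩))

/-- A walk avoiding `v` in `G − (T \ {v})` is a walk in `G − T`. -/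
lemma walk_transfer {G : SimpleGraph V} {T : Set V} {v : V} :
    ∀ {x y : V} (q : (gdel G (T \ {v})).Walk x y), v ∉ q.support →
      (gdel G T).Reachable x y := by
  intro x y q
  induction q with
  | nil => intro _; exact SimpleGraph.Reachable.refl _
  | @cons a b c h q ih =>
    intro hv
    rw [SimpleGraph.Walk.support_cons] at hv
    have hva : v ≠ a := fun e => hv (by simp [e])
    have hvq : v ∉ q.support := fun hmem => hv (by simp [hmem])
    have hvb : v ≠ b := fun e => hvq (e ▸ q.start_mem_support)
    have haT : a ∉ T :=
      fun hT => h.2.1 (Set.mem_diff_singleton.mpr ⟨hT, fun e => hva e.symm⟩)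
    have hbT : b ∉ T := fun hT =>
      h.2.2 (show b ∈ T \ {v} from Set.mem_diff_singleton.mpr ⟨hT, fun e => hvb e.symm⟩)
    exact ((show (gdel G T).Adj a b from ⟨h.1, haT, hbT⟩).reachable).trans (ih hvq)

/-- Invariant walk lemma. -/
lemma walk_reach_t {G : SimpleGraph V} {s v : V} {S T : Set V}
    (hSsub : S ⊆ compS G T s ∪ T) (hvS : v ∉ S) (hsT : s ∉ T) :
    ∀ {x y : V}, (gdel G (T \ {v})).Walk x y →
      (x ∈ compS G T s ∨ (x ∉ S ∧ (gdel G S).Reachable v x)) →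
      (y ∈ compS G T s ∨ (y ∉ S ∧ (gdel G S).Reachable v y)) := by
  intro x y q
  induction q with
  | nil => exact id
  | @cons a b c h q ih =>
    intro hx
    apply ih
    by_cases hb : b = v
    · subst hb; exact Or.inr ⟨hvS, SimpleGraph.Reachable.refl _⟩
    have hbT : b ∉ T := fun hbT => h.2.2 (Set.mem_diff_singleton.mpr ⟨hbT, hb⟩)
    by_cases hbc : b ∈ compS G T s
    · exact Or.inl hbc
    rcases hx with hx | ⟨haS, hreach⟩
    · have haT : a ∉ T := notin_of_reachable hsT hx
      exact Or.inl ((show (gdel G T).Reachable s a from hx).trans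
        (SimpleGraph.Adj.reachable ⟨h.1, haT, hbT⟩))
    · have hbS : b ∉ S := fun hbS => (hSsub hbS).elim hbc hbT
      exact Or.inr ⟨hbS,
        hreach.trans (SimpleGraph.Adj.reachable ⟨h.1, haS, hbS⟩)⟩

/-- Key containment: if `S`, `T` are minimal separators with
`C_s(G−S) ⊆ C_s(G−T)`, then `T ⊆ S ∪ C_t(G−S)`. -/
lemma key_subset {G : SimpleGraph V} {s t : V} {S T : Set V}
    (hS : IsMinSep G s t S) (hT : IsMinSep G s t T)
    (hcs : compS G S s ⊆ compS G T s) :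
    T ⊆ S ∪ compS G S t := by
  classical
  intro v hv
  by_cases hvS : v ∈ S
  · exact Or.inl hvS
  right
  have hsub : T \ {v} ⊂ T := Set.sdiff_singleton_ssubset.mpr hv
  have hnsep := hT.2 _ hsub
  have hreach : (gdel G (T \ {v})).Reachable s t := by
    by_contra hr
    exact hnsep ⟨fun h => hT.1.1 h.1, fun h => hT.1.2.1 h.1, hr⟩
  obtain ⟨p⟩ := hreach
  have hvp : v ∈ p.support := by
    by_contra hvp
    exact hT.1.2.2 (walk_transfer p hvp)
  have hq : (gdel G (T \ {v})).Walk v t := p.dropUntil v hvp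
  have hSsub := sep_subset hS hT.1.1 hcs
  rcases walk_reach_t hSsub hvS hT.1.1 hq
      (Or.inr ⟨hvS, SimpleGraph.Reachable.refl v⟩) with h | h
  · exact absurd (show (gdel G T).Reachable s t from h) hT.1.2.2
  · exact h.2.symm

lemma important_aux [Fintype V] (G : SimpleGraph V) (s t : V) (k : ℕ) :
    ∀ n (T : Set V), (compS G T s).ncard ≤ n → IsMinSep G s t T → T.ncard ≤ k →
      ∃ S, KImportant G s t k S ∧ compS G S s ⊆ compS G T s := by
  intro n
  induction n with
  | zero =>
    intro T hn _ _
    exfalso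
    have hmem : s ∈ compS G T s := SimpleGraph.Reachable.refl s
    have hpos : 0 < (compS G T s).ncard :=
      (Set.ncard_pos (Set.toFinite (compS G T s))).mpr ⟨s, hmem⟩
    omega
  | succ n ih =>
    intro T hn hT hTk
    by_cases himp : KImportant G s t k T
    · exact ⟨T, himp, subset_rfl⟩
    · have hex : ∃ S', IsMinSep G s t S' ∧ S'.ncard ≤ T.ncard ∧
          compS G S' s ⊂ compS G T s := by
        by_contra h
        exact himp ⟨hT, hTk, h⟩
      obtain ⟨S', hS', hcard, hss⟩ := hex
      have hlt : (compS G S' s).ncard < (compS G T s).ncard :=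
        Set.ncard_lt_ncard hss (Set.toFinite _)
      obtain ⟨S, hS, hsub⟩ := ih S' (by omega) hS' (le_trans hcard hTk)
      exact ⟨S, hS, hsub.trans hss.subset⟩

/-- Every minimal `s,t`-separator `T` with `|T| ≤ k` satisfies
`T ⊆ S ∪ C_t(G−S)` for some `k`-important `s,t`-separator `S`. -/
theorem stmt_6 [Fintype V] (G : SimpleGraph V) (s t : V) (hst : s ≠ t)
    (hadj : ¬ G.Adj s t) (k : ℕ) (hk : 0 < k)
    (T : Set V) (hT : IsMinSep G s t T) (hTk : T.ncard ≤ k) :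
    ∃ S : Set V, KImportant G s t k S ∧ T ⊆ S ∪ compS G S t := by
  obtain ⟨S, hS, hsub⟩ :=
    important_aux G s t k (compS G T s).ncard T le_rfl hT hTk
  exact ⟨S, hS, key_subset hS.1 hT hsub⟩
end

section
/- Let G be a finite simple undirected graph, s and t distinct non-adjacent vertices of G, and I ⊆ V(G)\{s,t} a set of vertices such that G−I admits an s,t-separator. There exists a minimum-cardinality s,t-separator of G containing I if and only if κ_{s,t}(G−I) = κ_{s,t}(G) − |I|, where G−I is the subgraph of G induced on V(G)\I. -/
variable {V : Type*}

/-- `S` is an `s,t`-separator of the induced subgraph `G − I`: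
`S ⊆ (V(G) \ I) \ {s,t}` and `s,t` are disconnected in `G − (I ∪ S)`. -/
def IsSepIn (G : SimpleGraph V) (s t : V) (I S : Set V) : Prop :=
  s ∉ S ∧ t ∉ S ∧ Disjoint S I ∧ ¬ (gdel G (I ∪ S)).Reachable s t

/-- `κ_{s,t}(G − I)`: the minimum cardinality of an `s,t`-separator of the induced
subgraph `G − I`.  In particular `kappaIn G s t ∅ = κ_{s,t}(G)`. -/
noncomputable def kappaIn (G : SimpleGraph V) (s t : V) (I : Set V) : ℕ :=
  sInf {n | ∃ S : Set V, IsSepIn G s t I S ∧ S.ncard = n}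

/-- For `I ⊆ V(G) \ {s,t}` such that `G − I` admits an `s,t`-separator,
there is a minimum-cardinality `s,t`-separator of `G` containing `I`
iff `κ_{s,t}(G − I) = κ_{s,t}(G) − |I|`. -/
theorem stmt_8 [Fintype V] (G : SimpleGraph V) (s t : V) (hst : s ≠ t)
    (hadj : ¬ G.Adj s t) (I : Set V) (hIs : s ∉ I) (hIt : t ∉ I)
    (hG : ∃ S : Set V, IsSepIn G s t ∅ S)
    (hGI : ∃ S : Set V, IsSepIn G s t I S) :
    (∃ S : Set V, IsSepIn G s t ∅ S ∧ S.ncard = kappaIn G s t ∅ ∧ I ⊆ S) ↔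
      kappaIn G s t I + I.ncard = kappaIn G s t ∅ := by
  classical
  -- κ(G) ≤ κ(G−I) + |I|, via any minimum separator T of G−I: I ∪ T separates G.
  have hneI : {n | ∃ S : Set V, IsSepIn G s t I S ∧ S.ncard = n}.Nonempty := by
    obtain ⟨S, hS⟩ := hGI; exact ⟨S.ncard, S, hS, rfl⟩
  obtain ⟨T, hT, hTc⟩ := Nat.sInf_mem hneI
  have hdTI : Disjoint I T := hT.2.2.1.symm
  have hsepU : IsSepIn G s t ∅ (I ∪ T) := by
    refine ⟨fun h => h.elim hIs hT.1, fun h => h.elim hIt hT.2.1,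
      Set.disjoint_empty _ , ?_⟩
    rw [Set.empty_union]
    exact hT.2.2.2
  have hcardU : (I ∪ T).ncard = I.ncard + T.ncard :=
    Set.ncard_union_eq hdTI (Set.toFinite _) (Set.toFinite _)
  have key : kappaIn G s t ∅ ≤ kappaIn G s t I + I.ncard := by
    have hmem : (I ∪ T).ncard ∈ {n | ∃ S : Set V, IsSepIn G s t ∅ S ∧ S.ncard = n} :=
      ⟨I ∪ T, hsepU, rfl⟩
    have h := Nat.sInf_le hmem
    have hTc' : T.ncard = kappaIn G s t I := hTc
    simp only [kappaIn] at h ⊢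
    omega
  constructor
  · rintro ⟨S, hS, hcard, hIS⟩
    have hTS : IsSepIn G s t I (S \ I) := by
      refine ⟨fun h => hS.1 h.1, fun h => hS.2.1 h.1, Set.disjoint_sdiff_left, ?_⟩
      rw [Set.union_diff_cancel hIS]
      have := hS.2.2.2
      rwa [Set.empty_union] at this
    have h1 : kappaIn G s t I ≤ (S \ I).ncard := Nat.sInf_le ⟨S \ I, hTS, rfl⟩
    have hdiff : (S \ I).ncard = S.ncard - I.ncard := Set.ncard_diff hIS (Set.toFinite I)
    have hIle : I.ncard ≤ S.ncard := Set.ncard_le_ncard hIS (Set.toFinite S)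
    omega
  · intro heq
    refine ⟨I ∪ T, hsepU, ?_, Set.subset_union_left⟩
    have hTc' : T.ncard = kappaIn G s t I := hTc
    omega
end

section
/- Let G be a finite simple undirected graph, s and t distinct non-adjacent vertices of G, u ∈ V(G)\{s,t} with s and t non-adjacent in Sat(G,{u}), and S a minimal s,t-separator of Sat(G,{u}). Then the connected component of s in Sat(G,{u})−S equals, as a vertex set, the connected component of s in G−S, and likewise the connected component of t in Sat(G,{u})−S equals the connected component of t in G−S. -/
variable {V : Type*}

/-- `Sat G U`: the graph obtained from `G` by turning the closed neighborhood
`N_G[u]` of each `u ∈ U` into a clique. -/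
def Sat (G : SimpleGraph V) (U : Set V) : SimpleGraph V :=
  G ⊔ SimpleGraph.fromRel (fun x y =>
    ∃ u ∈ U, x ∈ insert u (G.neighborSet u) ∧ y ∈ insert u (G.neighborSet u))


lemma reach_of_reach {G H : SimpleGraph V}
    (h : ∀ a b, G.Adj a b → H.Reachable a b) :
    ∀ {x y : V}, G.Reachable x y → H.Reachable x y := by
  intro x y r
  obtain ⟨w⟩ := r
  induction w with
  | nil => exact SimpleGraph.Reachable.refl _
  | cons ha _ ih => exact (h _ _ ha).trans ih

lemma sat_adj_iff (G : SimpleGraph V) (u : V) {a b : V} :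
    (Sat G {u}).Adj a b ↔ G.Adj a b ∨
      (a ≠ b ∧ a ∈ insert u (G.neighborSet u) ∧ b ∈ insert u (G.neighborSet u)) := by
  simp only [Sat, SimpleGraph.sup_adj, SimpleGraph.fromRel_adj, Set.mem_singleton_iff]
  constructor
  · rintro (h | ⟨hne, ⟨u', rfl, ha, hb⟩ | ⟨u', rfl, hb, ha⟩⟩)
    · exact Or.inl h
    · exact Or.inr ⟨hne, ha, hb⟩
    · exact Or.inr ⟨hne, ha, hb⟩
  · rintro (h | ⟨hne, ha, hb⟩)
    · exact Or.inl h
    · exact Or.inr ⟨hne, Or.inl ⟨u, rfl, ha, hb⟩⟩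

lemma key_walk {H : SimpleGraph V} {S : Set V} {u : V} :
    ∀ {x y : V} (w : (gdel H (S \ {u})).Walk x y), x ∉ S →
      (gdel H S).Reachable x y ∨
        ∃ a, (gdel H S).Reachable x a ∧ a ∉ S ∧ H.Adj a u := by
  intro x y w
  induction w with
  | nil => exact fun _ => Or.inl (SimpleGraph.Reachable.refl _)
  | @cons x z y h w ih =>
    intro hx
    by_cases hz : z = u
    · exact Or.inr ⟨x, SimpleGraph.Reachable.refl _, hx, hz ▸ h.1⟩
    · have hzS : z ∉ S := fun hmem => h.2.2 ⟨hmem, hz⟩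
      have hedge : (gdel H S).Adj x z := ⟨h.1, hx, hzS⟩
      rcases ih hzS with hr | ⟨a, ha, haS, hadj⟩
      · exact Or.inl (hedge.reachable.trans hr)
      · exact Or.inr ⟨a, hedge.reachable.trans ha, haS, hadj⟩

lemma u_not_mem_of_minsep (G : SimpleGraph V) (s t u : V) (S : Set V)
    (hS : IsMinSep (Sat G {u}) s t S) : u ∉ S := by
  intro hu
  obtain ⟨⟨hsS, htS, hns⟩, hmin⟩ := hS
  have hss : S \ {u} ⊂ S := Set.sdiff_singleton_ssubset.mpr hu
  have hnotsep := hmin (S \ {u}) hss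
  have hreach : (gdel (Sat G {u}) (S \ {u})).Reachable s t := by
    by_contra h
    exact hnotsep ⟨fun h' => hsS h'.1, fun h' => htS h'.1, h⟩
  obtain ⟨w⟩ := hreach
  rcases key_walk w hsS with hr | ⟨a, ha, haS, hau⟩
  · exact hns hr
  rcases key_walk w.reverse htS with hr | ⟨b, hb, hbS, hbu⟩
  · exact hns hr.symm
  have hane : a ≠ b := by
    rintro rfl
    exact hns (ha.trans hb.symm)
  have haN : a ∈ insert u (G.neighborSet u) := by
    rcases (sat_adj_iff G u).mp hau with h | ⟨_, h, _⟩
    · exact Set.mem_insert_of_mem _ h.symm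
    · exact h
  have hbN : b ∈ insert u (G.neighborSet u) := by
    rcases (sat_adj_iff G u).mp hbu with h | ⟨_, h, _⟩
    · exact Set.mem_insert_of_mem _ h.symm
    · exact h
  have hab : (Sat G {u}).Adj a b :=
    (sat_adj_iff G u).mpr (Or.inr ⟨hane, haN, hbN⟩)
  exact hns (ha.trans ((SimpleGraph.Adj.reachable ⟨hab, haS, hbS⟩ :
    (gdel (Sat G {u}) S).Reachable a b).trans hb.symm))

lemma compS_sat_eq (G : SimpleGraph V) (u : V) (S : Set V) (huS : u ∉ S) (v : V) :
    compS (Sat G {u}) S v = compS G S v := by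
  ext w
  simp only [compS, Set.mem_setOf_eq]
  constructor
  · refine reach_of_reach (fun a b hab => ?_)
    obtain ⟨hab, haS, hbS⟩ := hab
    rcases (sat_adj_iff G u).mp hab with h | ⟨hne, ha, hb⟩
    · exact SimpleGraph.Adj.reachable ⟨h, haS, hbS⟩
    · rcases Set.mem_insert_iff.mp ha with rfl | ha
      · rcases Set.mem_insert_iff.mp hb with rfl | hb
        · exact absurd rfl hne
        · exact SimpleGraph.Adj.reachable ⟨hb, haS, hbS⟩
      · rcases Set.mem_insert_iff.mp hb with rfl | hb
        · exact SimpleGraph.Adj.reachable ⟨SimpleGraph.Adj.symm ha, haS, hbS⟩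
        · exact (SimpleGraph.Adj.reachable
            (⟨(ha : G.Adj u a).symm, haS, huS⟩ : (gdel G S).Adj a u)).trans
            (SimpleGraph.Adj.reachable ⟨(hb : G.Adj u b), huS, hbS⟩)
  · refine reach_of_reach (fun a b hab => ?_)
    exact SimpleGraph.Adj.reachable
      ⟨(sat_adj_iff G u).mpr (Or.inl hab.1), hab.2.1, hab.2.2⟩

/-- For a minimal `s,t`-separator `S` of `Sat(G,{u})`, the components
of `s` and of `t` in `Sat(G,{u}) − S` coincide with those in `G − S`. -/
theorem stmt_14 [Fintype V] (G : SimpleGraph V) (s t u : V) (hst : s ≠ t)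
    (hadj : ¬ G.Adj s t) (hus : u ≠ s) (hut : u ≠ t)
    (hsat : ¬ (Sat G {u}).Adj s t)
    (S : Set V) (hS : IsMinSep (Sat G {u}) s t S) :
    compS (Sat G {u}) S s = compS G S s ∧ compS (Sat G {u}) S t = compS G S t := by
  have huS : u ∉ S := u_not_mem_of_minsep G s t u S hS
  exact ⟨compS_sat_eq G u S huS s, compS_sat_eq G u S huS t⟩
end

section
/- Let G be a finite simple undirected graph, s and t distinct non-adjacent vertices of G, and v ∈ V(G)\{s,t}. There exists a minimal s,t-separator of G containing v if and only if there exists a chordless (induced) path in G from s to t that passes through v. -/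
variable {V : Type*}

/-- every support vertex of a walk is reachable from the start -/
lemma reach_of_mem_support {H : SimpleGraph V} : ∀ {a b : V} (q : H.Walk a b) (x : V),
    x ∈ q.support → H.Reachable a x := by
  intro a b q
  induction q with
  | nil => intro x hx; simp at hx; subst hx; exact SimpleGraph.Reachable.refl _
  | cons h q ih =>
      intro x hx
      rw [SimpleGraph.Walk.support_cons] at hx
      rcases List.mem_cons.mp hx with rfl | hx
      · exact SimpleGraph.Reachable.refl _
      · exact (h.reachable).trans (ih x hx)

/-- support vertices of a walk in `gdel G T` avoid `T` except possibly the start -/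
lemma support_gdel {G : SimpleGraph V} {T : Set V} : ∀ {a b : V} (q : (gdel G T).Walk a b)
    (x : V), x ∈ q.support → x = a ∨ x ∉ T := by
  intro a b q
  induction q with
  | nil => intro x hx; simp at hx; exact Or.inl hx
  | cons h q ih =>
      intro x hx
      rw [SimpleGraph.Walk.support_cons] at hx
      rcases List.mem_cons.mp hx with rfl | hx
      · exact Or.inl rfl
      · rcases ih x hx with rfl | hx'
        · exact Or.inr h.2.2
        · exact Or.inr hx'

lemma compS_not_mem {G : SimpleGraph V} {S : Set V} {s x : V} (hs : s ∉ S)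
    (hx : x ∈ compS G S s) : x ∉ S := by
  obtain ⟨q⟩ := hx
  rcases support_gdel q x q.end_mem_support with rfl | h
  · exact hs
  · exact h

/-- transfer reachability along an adjacency-implication on the support -/
lemma reach_mono_support {H H' : SimpleGraph V} : ∀ {a b : V} (q : H.Walk a b),
    (∀ x y : V, x ∈ q.support → y ∈ q.support → H.Adj x y → H'.Adj x y) →
    H'.Reachable a b := by
  intro a b q
  induction q with
  | nil => intro _; exact SimpleGraph.Reachable.refl _
  | cons h q ih =>
      intro hadj
      refine (SimpleGraph.Adj.reachable ?_).trans (ih ?_)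
      · exact hadj _ _ (by simp) (by simp [SimpleGraph.Walk.start_mem_support]) h
      · intro x y hx hy
        exact hadj x y (by simp [hx]) (by simp [hy])

/-- prefix walk to an indexed support vertex -/
lemma exists_walk_to_get {H : SimpleGraph V} : ∀ {a b : V} (p : H.Walk a b) (i : ℕ)
    (hi : i < p.support.length), ∃ q : H.Walk a (p.support[i]), q.length = i := by
  intro a b p
  induction p with
  | nil => intro i hi; simp at hi; subst hi; exact ⟨SimpleGraph.Walk.nil, rfl⟩
  | @cons a c b h p ih =>
      intro i hi
      match i with
      | 0 => exact ⟨SimpleGraph.Walk.nil, rfl⟩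
      | (k+1) =>
          rw [SimpleGraph.Walk.support_cons, List.length_cons] at hi
          obtain ⟨q, hq⟩ := ih k (Nat.lt_of_succ_lt_succ hi)
          refine ⟨SimpleGraph.Walk.cons h (by simpa using q), ?_⟩
          simp [SimpleGraph.Walk.length_cons, hq]

/-- suffix walk from an indexed support vertex -/
lemma exists_walk_from_get {H : SimpleGraph V} : ∀ {a b : V} (p : H.Walk a b) (i : ℕ)
    (hi : i < p.support.length), ∃ q : H.Walk (p.support[i]) b, q.length = p.length - i := by
  intro a b p
  induction p with
  | nil => intro i hi; simp at hi; subst hi; exact ⟨SimpleGraph.Walk.nil, rfl⟩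
  | @cons a c b h p ih =>
      intro i hi
      match i with
      | 0 => exact ⟨SimpleGraph.Walk.cons h p, by simp⟩
      | (k+1) =>
          rw [SimpleGraph.Walk.support_cons, List.length_cons] at hi
          obtain ⟨q, hq⟩ := ih k (Nat.lt_of_succ_lt_succ hi)
          exact ⟨by simpa using q, by simpa using hq⟩

/-- a shortest walk has no chords: adjacent support vertices are consecutive -/
lemma shortest_no_chord {H : SimpleGraph V} {a b : V} (p : H.Walk a b)
    (hp : p.length = H.dist a b) (i j : Fin p.support.length)
    (hij : H.Adj (p.support.get i) (p.support.get j)) :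
    i.val + 1 = j.val ∨ j.val + 1 = i.val := by
  have hlen : p.support.length = p.length + 1 := SimpleGraph.Walk.length_support p
  have hdist : ∀ k : Fin p.support.length, H.dist a (p.support.get k) = k.val := by
    intro k
    obtain ⟨q1, hq1⟩ := exists_walk_to_get p k.val k.isLt
    obtain ⟨q2, hq2⟩ := exists_walk_from_get p k.val k.isLt
    have h1 : H.dist a (p.support.get k) ≤ k.val := by
      simpa [hq1, List.get_eq_getElem] using SimpleGraph.dist_le q1
    have hr : H.Reachable a (p.support.get k) := by
      simpa [List.get_eq_getElem] using ⟨q1⟩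
    obtain ⟨w, hw⟩ := hr.exists_walk_length_eq_dist
    have h2 : H.dist a b ≤ H.dist a (p.support.get k) + (p.length - k.val) := by
      have := SimpleGraph.dist_le ((w.append (by simpa [List.get_eq_getElem] using q2)))
      simpa [SimpleGraph.Walk.length_append, hw, hq2] using this
    have hk : k.val ≤ p.length := by have := k.isLt; omega
    omega
  have hne : i.val ≠ j.val := by
    intro h
    have : i = j := Fin.ext h
    subst this
    exact H.irrefl hij
  have h1 : H.dist a (p.support.get j) ≤ H.dist a (p.support.get i) + 1 := by
    have hr : H.Reachable a (p.support.get i) := by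
      obtain ⟨q1, _⟩ := exists_walk_to_get p i.val i.isLt
      simpa [List.get_eq_getElem] using ⟨q1⟩
    obtain ⟨w, hw⟩ := hr.exists_walk_length_eq_dist
    have := SimpleGraph.dist_le (w.append hij.toWalk)
    simpa [SimpleGraph.Walk.length_append, hw] using this
  have h2 : H.dist a (p.support.get i) ≤ H.dist a (p.support.get j) + 1 := by
    have hr : H.Reachable a (p.support.get j) := by
      obtain ⟨q1, _⟩ := exists_walk_to_get p j.val j.isLt
      simpa [List.get_eq_getElem] using ⟨q1⟩
    obtain ⟨w, hw⟩ := hr.exists_walk_length_eq_dist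
    have := SimpleGraph.dist_le (w.append hij.symm.toWalk)
    simpa [SimpleGraph.Walk.length_append, hw] using this
  rw [hdist i, hdist j] at h1 h2
  omega

/-- along a walk in `gdel G (S \ {u})` starting from a vertex reachable from `s` in
`gdel G S`, either the end is reachable or we find a neighbor of `u` reachable from `s`. -/
lemma reach_or_nbr {G : SimpleGraph V} {S : Set V} {u s : V} (hs : s ∉ S) :
    ∀ {a b : V} (q : (gdel G (S \ {u})).Walk a b), (gdel G S).Reachable s a →
    (gdel G S).Reachable s b ∨ ∃ w, (gdel G S).Reachable s w ∧ G.Adj u w := by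
  intro a b q
  induction q with
  | nil => intro h; exact Or.inl h
  | @cons a c b h q ih =>
      intro hsa
      by_cases hc : c = u
      · subst hc
        exact Or.inr ⟨a, hsa, h.1.symm⟩
      · have ha : a ∉ S := compS_not_mem hs hsa
        have hcS : c ∉ S := fun hcS => h.2.2 ⟨hcS, hc⟩
        have : (gdel G S).Adj a c := ⟨h.1, ha, hcS⟩
        exact ih (hsa.trans this.reachable)

/-- every vertex of a minimal separator has a neighbor in the component of `s`. -/
lemma minsep_nbr {G : SimpleGraph V} {s t : V} {S : Set V} (hmin : IsMinSep G s t S)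
    {u : V} (hu : u ∈ S) : ∃ w, w ∈ compS G S s ∧ G.Adj u w := by
  obtain ⟨⟨hs, ht, hsep⟩, hminimal⟩ := hmin
  have hss : S \ {u} ⊂ S := Set.sdiff_singleton_ssubset.mpr hu
  have hnot := hminimal _ hss
  rw [IsSep] at hnot
  push_neg at hnot
  obtain ⟨q⟩ := hnot (fun h => hs h.1) (fun h => ht h.1)
  rcases reach_or_nbr hs q (SimpleGraph.Reachable.refl s) with h | ⟨w, hw, hadj⟩
  · exact absurd h hsep
  · exact ⟨w, hw, hadj⟩

/-- extract a minimal separator inside a given separator. -/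
lemma exists_min [Fintype V] (G : SimpleGraph V) (s t : V) :
    ∀ (n : ℕ) (S0 : Set V), S0.ncard ≤ n → IsSep G s t S0 →
    ∃ S, S ⊆ S0 ∧ IsMinSep G s t S := by
  intro n
  induction n with
  | zero =>
      intro S0 hcard hsep
      refine ⟨S0, subset_rfl, hsep, ?_⟩
      intro S' hS' _
      have h0 : S0 = ∅ := (Set.ncard_eq_zero (Set.toFinite S0)).mp (Nat.le_zero.mp hcard)
      rw [h0] at hS'
      exact (hS'.2 (Set.empty_subset S')).elim
  | succ n ih =>
      intro S0 hcard hsep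
      by_cases h : ∃ S', S' ⊂ S0 ∧ IsSep G s t S'
      · obtain ⟨S', hss, hsep'⟩ := h
        have hlt : S'.ncard < S0.ncard := Set.ncard_lt_ncard hss (Set.toFinite S0)
        obtain ⟨S, hsub, hmin⟩ := ih S' (by omega) hsep'
        exact ⟨S, hsub.trans hss.subset, hmin⟩
      · push_neg at h
        exact ⟨S0, subset_rfl, hsep, fun S' hS' => h S' hS'⟩

lemma forward_dir (G : SimpleGraph V) {s t v : V} (S : Set V)
    (hmin : IsMinSep G s t S) (hvS : v ∈ S) :
    ∃ p : G.Walk s t, p.IsPath ∧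
      (∀ i j : Fin p.support.length,
        G.Adj (p.support.get i) (p.support.get j) →
          i.val + 1 = j.val ∨ j.val + 1 = i.val) ∧
      v ∈ p.support := by
  obtain ⟨⟨hs, ht, hsep⟩, hminimal⟩ := hmin
  have hmin' : IsMinSep G t s S := by
    refine ⟨⟨ht, hs, fun h => hsep h.symm⟩, ?_⟩
    intro S' hS' hsep'
    exact hminimal S' hS' ⟨hsep'.2.1, hsep'.1, fun h => hsep'.2.2 h.symm⟩
  obtain ⟨a, haC, hva⟩ := minsep_nbr ⟨⟨hs, ht, hsep⟩, hminimal⟩ hvS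
  obtain ⟨b, hbC, hvb⟩ := minsep_nbr hmin' hvS
  set Cs := compS G S s with hCs
  set Ct := compS G S t with hCt
  set Hs := gdel G ((Cs ∪ {v})ᶜ) with hHs
  set Ht := gdel G ((Ct ∪ {v})ᶜ) with hHt
  -- reachability inside the component graphs
  have hreach_s : Hs.Reachable s v := by
    obtain ⟨q⟩ := id haC
    have h1 : Hs.Reachable s a := by
      refine reach_mono_support q ?_
      intro x y hx hy hxy
      have hxC : x ∈ Cs := reach_of_mem_support q x hx
      have hyC : y ∈ Cs := reach_of_mem_support q y hy
      exact ⟨hxy.1, by simp [hxC], by simp [hyC]⟩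
    refine h1.trans (SimpleGraph.Adj.reachable ?_)
    exact ⟨hva.symm, by simp [haC], by simp⟩
  have hreach_t : Ht.Reachable t v := by
    obtain ⟨q⟩ := id hbC
    have h1 : Ht.Reachable t b := by
      refine reach_mono_support q ?_
      intro x y hx hy hxy
      have hxC : x ∈ Ct := reach_of_mem_support q x hx
      have hyC : y ∈ Ct := reach_of_mem_support q y hy
      exact ⟨hxy.1, by simp [hxC], by simp [hyC]⟩
    refine h1.trans (SimpleGraph.Adj.reachable ?_)
    exact ⟨hvb.symm, by simp [hbC], by simp⟩
  -- shortest walks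
  obtain ⟨ps0, hps0⟩ := hreach_s.exists_walk_length_eq_dist
  obtain ⟨pt0, hpt0⟩ := hreach_t.symm.exists_walk_length_eq_dist
  have hpath_s : ps0.IsPath := ps0.isPath_of_length_eq_dist hps0
  have hpath_t : pt0.IsPath := pt0.isPath_of_length_eq_dist hpt0
  have hnodup_s : ps0.support.Nodup := (SimpleGraph.Walk.isPath_def _).mp hpath_s
  have hnodup_t : pt0.support.Nodup := (SimpleGraph.Walk.isPath_def _).mp hpath_t
  have hchord_s := shortest_no_chord ps0 hps0
  have hchord_t := shortest_no_chord pt0 hpt0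
  -- support inclusions
  have hsubs : ∀ x ∈ ps0.support, x ∈ Cs ∪ {v} := by
    intro x hx
    rcases support_gdel ps0 x hx with rfl | h
    · exact Or.inl (SimpleGraph.Reachable.refl _)
    · exact Set.notMem_compl_iff.mp h
  have hsubt : ∀ x ∈ pt0.support, x ∈ Ct ∪ {v} := by
    intro x hx
    rcases support_gdel pt0 x hx with rfl | h
    · exact Or.inr rfl
    · exact Set.notMem_compl_iff.mp h
  have hvnot_tail : v ∉ pt0.support.tail := by
    have h := hnodup_t
    rw [pt0.support_eq_cons] at h
    exact (List.nodup_cons.mp h).1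
  have htail_sub : ∀ x ∈ pt0.support.tail, x ∈ Ct := by
    intro x hx
    rcases (Set.mem_union _ _ _).mp (hsubt x (List.mem_of_mem_tail hx)) with h | h
    · exact h
    · rw [Set.mem_singleton_iff] at h
      exact absurd (h ▸ hx) hvnot_tail
  have hCC : ∀ x, x ∈ Cs → x ∈ Ct → False := fun x h1 h2 => hsep (h1.trans h2.symm)
  have hvCt : v ∉ Ct := fun h => (compS_not_mem ht h) hvS
  -- transfer to G
  have hle_s : Hs ≤ G := fun _ _ h => h.1
  have hle_t : Ht ≤ G := fun _ _ h => h.1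
  have hes : ∀ e ∈ ps0.edges, e ∈ G.edgeSet :=
    fun e he => (SimpleGraph.edgeSet_mono hle_s) (ps0.edges_subset_edgeSet he)
  have het : ∀ e ∈ pt0.edges, e ∈ G.edgeSet :=
    fun e he => (SimpleGraph.edgeSet_mono hle_t) (pt0.edges_subset_edgeSet he)
  set qs : G.Walk s v := ps0.transfer G hes with hqs
  set qt : G.Walk v t := pt0.transfer G het with hqt
  have hrep : (qs.append qt).support = ps0.support ++ pt0.support.tail := by
    rw [SimpleGraph.Walk.support_append, hqs, hqt, SimpleGraph.Walk.support_transfer,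
      SimpleGraph.Walk.support_transfer]
  have hms_pos : 0 < ps0.support.length := by
    rw [SimpleGraph.Walk.length_support]; omega
  have hmt_pos : 0 < pt0.support.length := by
    rw [SimpleGraph.Walk.length_support]; omega
  have hn : (qs.append qt).support.length = ps0.support.length + pt0.support.tail.length := by
    rw [hrep, List.length_append]
  have htlen : pt0.support.tail.length = pt0.support.length - 1 := List.length_tail
  refine ⟨qs.append qt, ?_, ?_, ?_⟩
  case _ =>
    rw [SimpleGraph.Walk.isPath_def, hrep, List.nodup_append]
    refine ⟨hnodup_s, hnodup_t.tail, ?_⟩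
    intro x hx1 y hx2 hxy
    subst hxy
    rcases (Set.mem_union _ _ _).mp (hsubs x hx1) with h | h
    · exact hCC x h (htail_sub x hx2)
    · rw [Set.mem_singleton_iff] at h
      subst h
      exact hvnot_tail hx2
  case _ =>
    intro i j hA
    have hget1 : ∀ (k : Fin (qs.append qt).support.length) (hk : k.val < ps0.support.length),
        (qs.append qt).support.get k = ps0.support[k.val] := by
      intro k hk
      rw [List.get_eq_getElem, List.getElem_of_eq hrep, List.getElem_append_left hk]
    have hget2 : ∀ (k : Fin (qs.append qt).support.length) (hk : ps0.support.length ≤ k.val),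
        ∃ hk2 : k.val - ps0.support.length + 1 < pt0.support.length,
        (qs.append qt).support.get k = pt0.support[k.val - ps0.support.length + 1] := by
      intro k hk
      have hb : k.val - ps0.support.length < pt0.support.tail.length := by
        have h1 := k.isLt
        omega
      have hk2 : k.val - ps0.support.length + 1 < pt0.support.length := by
        rw [htlen] at hb; omega
      refine ⟨hk2, ?_⟩
      rw [List.get_eq_getElem, List.getElem_of_eq hrep, List.getElem_append_right hk,
        List.getElem_tail]
    have hchordS : ∀ (i' j' : ℕ) (hi : i' < ps0.support.length) (hj : j' < ps0.support.length),
        Hs.Adj (ps0.support[i']) (ps0.support[j']) → i' + 1 = j' ∨ j' + 1 = i' := by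
      intro i' j' hi' hj' h
      exact hchord_s ⟨i', hi'⟩ ⟨j', hj'⟩ (by simpa using h)
    have hchordT : ∀ (i' j' : ℕ) (hi : i' < pt0.support.length) (hj : j' < pt0.support.length),
        Ht.Adj (pt0.support[i']) (pt0.support[j']) → i' + 1 = j' ∨ j' + 1 = i' := by
      intro i' j' hi' hj' h
      exact hchord_t ⟨i', hi'⟩ ⟨j', hj'⟩ (by simpa using h)
    have hlastv : ps0.support[ps0.support.length - 1]'(by omega) = v := by
      rw [← List.getLast_eq_getElem]
      exact ps0.getLast_support
    have hfirstv : pt0.support[0]'hmt_pos = v := by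
      have hcons := pt0.support_eq_cons
      rw [List.getElem_of_eq hcons, List.getElem_cons_zero]
    have key : ∀ i j : Fin (qs.append qt).support.length, i.val < ps0.support.length →
        ps0.support.length ≤ j.val →
        G.Adj ((qs.append qt).support.get i) ((qs.append qt).support.get j) →
        i.val + 1 = j.val := by
      intro i j hi hj hA
      obtain ⟨hk2, hj2⟩ := hget2 j hj
      rw [hget1 i hi, hj2] at hA
      have hy : pt0.support[j.val - ps0.support.length + 1] ∈ pt0.support.tail := by
        have h := List.getElem_tail (l := pt0.support) (i := j.val - ps0.support.length)
          (h := by rw [htlen]; omega)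
        rw [← h]
        exact List.getElem_mem _
      have hyCt := htail_sub _ hy
      rcases (Set.mem_union _ _ _).mp (hsubs _ (List.getElem_mem hi)) with hx | hx
      · exfalso
        have hxS := compS_not_mem hs hx
        have hyS := compS_not_mem ht hyCt
        exact hsep ((hx.trans (SimpleGraph.Adj.reachable ⟨hA, hxS, hyS⟩)).trans hyCt.symm)
      · rw [Set.mem_singleton_iff] at hx
        have hieq : i.val = ps0.support.length - 1 :=
          (List.Nodup.getElem_inj_iff hnodup_s).mp (hx.trans hlastv.symm)
        rw [hx] at hA
        have hadjt := hchordT 0 (j.val - ps0.support.length + 1) hmt_pos hk2 (by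
          rw [hfirstv]
          exact ⟨hA, Set.notMem_compl_iff.mpr (Or.inr rfl),
            Set.notMem_compl_iff.mpr (Or.inl hyCt)⟩)
        omega
    by_cases hi : i.val < ps0.support.length
    · by_cases hj : j.val < ps0.support.length
      · rw [hget1 i hi, hget1 j hj] at hA
        exact hchordS _ _ hi hj ⟨hA, Set.notMem_compl_iff.mpr (hsubs _ (List.getElem_mem hi)),
          Set.notMem_compl_iff.mpr (hsubs _ (List.getElem_mem hj))⟩
      · exact Or.inl (key i j hi (by omega) hA)
    · by_cases hj : j.val < ps0.support.length
      · exact Or.inr (key j i hj (by omega) hA.symm)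
      · push_neg at hi hj
        obtain ⟨hk2i, hi2⟩ := hget2 i hi
        obtain ⟨hk2j, hj2⟩ := hget2 j hj
        rw [hi2, hj2] at hA
        have := hchordT _ _ hk2i hk2j ⟨hA,
          Set.notMem_compl_iff.mpr (hsubt _ (List.getElem_mem hk2i)),
          Set.notMem_compl_iff.mpr (hsubt _ (List.getElem_mem hk2j))⟩
        omega
  case _ =>
    rw [hrep]
    exact List.mem_append_left _ ps0.end_mem_support


lemma backward_dir [Fintype V] (G : SimpleGraph V) {s t v : V} (hvs : v ≠ s) (hvt : v ≠ t)
    (p : G.Walk s t) (hpath : p.IsPath)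
    (hC : ∀ i j : Fin p.support.length,
      G.Adj (p.support.get i) (p.support.get j) →
        i.val + 1 = j.val ∨ j.val + 1 = i.val)
    (hv : v ∈ p.support) :
    ∃ S : Set V, IsMinSep G s t S ∧ v ∈ S := by
  classical
  have hnodup : p.support.Nodup := (SimpleGraph.Walk.isPath_def _).mp hpath
  set L := p.support with hL
  set i0 := L.idxOf v with hi0def
  have hi0 : i0 < L.length := List.idxOf_lt_length_iff.mpr hv
  have hgeti0 : L[i0] = v := List.getElem_idxOf hi0
  have hnpos : 0 < L.length := by
    rw [hL, SimpleGraph.Walk.length_support]; omega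
  have hget0 : L[0]'hnpos = s := by
    have hcons := p.support_eq_cons
    rw [List.getElem_of_eq (hL.trans hcons), List.getElem_cons_zero]
  have hgetlast : L[L.length - 1]'(by omega) = t := by
    rw [← List.getLast_eq_getElem]
    exact p.getLast_support
  have hi0pos : 0 < i0 := by
    rcases Nat.eq_zero_or_pos i0 with h | h
    · exfalso
      apply hvs
      rw [← hgeti0, ← hget0]
      congr 1
    · exact h
  have hi0lt : i0 < L.length - 1 := by
    rcases Nat.lt_or_ge i0 (L.length - 1) with h | h
    · exact h
    · exfalso
      apply hvt
      rw [← hgeti0, ← hgetlast]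
      congr 1
      omega
  set S0 : Set V := {x | x ∉ p.support} ∪ {v} with hS0
  have hmemS0 : ∀ x, x ∈ S0 ↔ (x ∉ L ∨ x = v) := by
    intro x
    simp [hS0, hL, or_comm]
  have hs0 : s ∉ S0 := by
    rw [hmemS0]
    push_neg
    exact ⟨by rw [hL]; exact p.start_mem_support, fun h => hvs h.symm⟩
  have ht0 : t ∉ S0 := by
    rw [hmemS0]
    push_neg
    exact ⟨by rw [hL]; exact p.end_mem_support, fun h => hvt h.symm⟩
  -- adjacency preserves the side of i0
  have hK : ∀ x y, (gdel G S0).Adj x y → (L.idxOf x < i0 ↔ L.idxOf y < i0) := by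
    intro x y hxy
    obtain ⟨hGxy, hx, hy⟩ := hxy
    rw [hmemS0] at hx hy
    push_neg at hx hy
    obtain ⟨hxL, hxv⟩ := hx
    obtain ⟨hyL, hyv⟩ := hy
    have hix : L.idxOf x < L.length := List.idxOf_lt_length_iff.mpr hxL
    have hiy : L.idxOf y < L.length := List.idxOf_lt_length_iff.mpr hyL
    have hgx : L[L.idxOf x] = x := List.getElem_idxOf hix
    have hgy : L[L.idxOf y] = y := List.getElem_idxOf hiy
    have hcons := hC ⟨L.idxOf x, hix⟩ ⟨L.idxOf y, hiy⟩ (by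
      simp only [List.get_eq_getElem]
      rw [hgx, hgy]
      exact hGxy)
    have hxne : L.idxOf x ≠ i0 := by
      intro h
      apply hxv
      rw [← hgx, ← hgeti0]
      congr 1
    have hyne : L.idxOf y ≠ i0 := by
      intro h
      apply hyv
      rw [← hgy, ← hgeti0]
      congr 1
    simp only [Fin.val_mk] at hcons
    omega
  have hinv : ∀ {a b : V} (q : (gdel G S0).Walk a b),
      L.idxOf a < i0 → L.idxOf b < i0 := by
    intro a b q
    induction q with
    | nil => exact id
    | cons h q ih => intro ha; exact ih ((hK _ _ h).mp ha)
  have hsep0 : IsSep G s t S0 := by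
    refine ⟨hs0, ht0, ?_⟩
    rintro ⟨q⟩
    have hs_idx : L.idxOf s = 0 := by
      have hcons := p.support_eq_cons
      rw [hL, hcons]
      exact List.idxOf_cons_self
    have ht_idx : L.idxOf t = L.length - 1 := by
      have h1 : L.idxOf t < L.length :=
        List.idxOf_lt_length_iff.mpr (by rw [hL]; exact p.end_mem_support)
      refine (List.Nodup.getElem_inj_iff hnodup (hi := h1) (hj := by omega)).mp ?_
      rw [List.getElem_idxOf h1, hgetlast]
    have := hinv q (by omega)
    omega
  obtain ⟨S, hsub, hmin⟩ := exists_min G s t S0.ncard S0 le_rfl hsep0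
  refine ⟨S, hmin, ?_⟩
  by_contra hvnot
  apply hmin.1.2.2
  refine reach_mono_support p ?_
  intro x y hx hy hxy
  have hxS : x ∉ S := by
    intro hxS
    rcases (hmemS0 x).mp (hsub hxS) with h | h
    · exact h hx
    · exact hvnot (h ▸ hxS)
  have hyS : y ∉ S := by
    intro hyS
    rcases (hmemS0 y).mp (hsub hyS) with h | h
    · exact h hy
    · exact hvnot (h ▸ hyS)
  exact ⟨hxy, hxS, hyS⟩

/-- There is a minimal `s,t`-separator of `G` containing `v` iff there
is a chordless (induced) `s,t`-path of `G` through `v`: a simple path in which no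
two non-consecutive vertices are adjacent in `G`. -/
theorem stmt_15 [Fintype V] (G : SimpleGraph V) (s t v : V) (hst : s ≠ t)
    (hadj : ¬ G.Adj s t) (hvs : v ≠ s) (hvt : v ≠ t) :
    (∃ S : Set V, IsMinSep G s t S ∧ v ∈ S) ↔
      ∃ p : G.Walk s t, p.IsPath ∧
        (∀ i j : Fin p.support.length,
          G.Adj (p.support.get i) (p.support.get j) →
            i.val + 1 = j.val ∨ j.val + 1 = i.val) ∧
        v ∈ p.support := by
  constructor
  · rintro ⟨S, hmin, hvS⟩
    exact forward_dir G S hmin hvS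
  · rintro ⟨p, hpath, hC, hv⟩
    exact backward_dir G hvs hvt p hpath hC hv
end
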